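/- arXiv:1407.7922 — 2 statements merged into one kernel-verified Lean document; each statement's English description precedes it below -/
import Mathlib

section
/- Let (b₁, r₁) and (b₂, r₂) be pairs of positive integers with 0 < bᵢ < rᵢ, and suppose b₁r₂ − b₂r₁ = 1. Set n = r₁ + r₂. Then Δ^n(b₁,r₁) + Δ^n(b₂,r₂) = Δ^n(b₁+b₂, r₁+r₂) + 1. -/
/-! The floors `⌊bᵢn/rᵢ⌋` are read off from `bᵢn = (b₁ + b₂)rᵢ ± 1`, a restatement of
`b₁r₂ − b₂r₁ = 1` for `n = r₁ + r₂`; cleared of the halving in `Delta`, the identity is then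
the same relation once more. -/

def Delta (n b r : ℕ) : ℤ :=
  let d : ℤ := (b * n / r : ℕ)
  d * b * n - (r * (d ^ 2 + d)) / 2

lemma two_mul_Delta (n b r : ℕ) :
    2 * Delta n b r = 2 * ((b * n / r : ℕ) : ℤ) * b * n
      - r * (((b * n / r : ℕ) : ℤ) ^ 2 + ((b * n / r : ℕ) : ℤ)) := by
  set d : ℤ := ((b * n / r : ℕ) : ℤ)
  have hdvd : (2 : ℤ) ∣ r * (d ^ 2 + d) :=
    Dvd.dvd.mul_left (by simpa [sq, mul_add] using (Int.even_mul_succ_self d).two_dvd) _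
  rw [Delta, mul_sub, Int.mul_ediv_cancel' hdvd, mul_assoc, mul_assoc, mul_assoc]

lemma natCast_div_eq_of_eq_mul_add {a r : ℕ} {q s : ℤ} (h : (a : ℤ) = q * r + s) (hs : 0 ≤ s)
    (hsr : s < r) : ((a / r : ℕ) : ℤ) = q := by
  rw [Int.natCast_div]
  exact ((Int.ediv_emod_unique (hs.trans_lt hsr)).2 ⟨by rw [h]; ring, hs, hsr⟩).1

theorem stmt_1_general (b₁ r₁ b₂ r₂ : ℕ) (hb₁ : 0 < b₁) (hr₁ : b₁ < r₁)
    (hr₂ : b₂ < r₂) (hprime : b₁ * r₂ = b₂ * r₁ + 1) :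
    Delta (r₁ + r₂) b₁ r₁ + Delta (r₁ + r₂) b₂ r₂
      = Delta (r₁ + r₂) (b₁ + b₂) (r₁ + r₂) + 1 := by
  have hp : (b₁ : ℤ) * r₂ = b₂ * r₁ + 1 := by exact_mod_cast hprime
  have hδ₁ : ((b₁ * (r₁ + r₂) / r₁ : ℕ) : ℤ) = b₁ + b₂ :=
    natCast_div_eq_of_eq_mul_add (s := 1) (by push_cast; linear_combination hp)
      zero_le_one (by omega)
  have hδ₂ : ((b₂ * (r₁ + r₂) / r₂ : ℕ) : ℤ) = b₁ + b₂ - 1 :=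
    natCast_div_eq_of_eq_mul_add (s := r₂ - 1) (by push_cast; linear_combination -hp)
      (by omega) (by omega)
  have hδ : (((b₁ + b₂) * (r₁ + r₂) / (r₁ + r₂) : ℕ) : ℤ) = b₁ + b₂ := by
    rw [Nat.mul_div_cancel _ (by omega)]; push_cast; rfl
  refine mul_left_cancel₀ (two_ne_zero (α := ℤ)) ?_
  rw [mul_add, mul_add, two_mul_Delta, two_mul_Delta, two_mul_Delta, hδ₁, hδ₂, hδ]
  push_cast
  linear_combination 2 * hp

theorem stmt_1 (b₁ r₁ b₂ r₂ : ℕ) (hb₁ : 0 < b₁) (hr₁ : b₁ < r₁)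
    (hb₂ : 0 < b₂) (hr₂ : b₂ < r₂) (hprime : b₁ * r₂ = b₂ * r₁ + 1) :
    Delta (r₁ + r₂) b₁ r₁ + Delta (r₁ + r₂) b₂ r₂
      = Delta (r₁ + r₂) (b₁ + b₂) (r₁ + r₂) + 1 :=
  stmt_1_general b₁ r₁ b₂ r₂ hb₁ hr₁ hr₂ hprime
end

section
/- Let (b₁, r₁) and (b₂, r₂) be pairs of positive integers with 0 < bᵢ < rᵢ, and let n ≥ 2 be an integer. Then Δ^n(b₁,r₁) + Δ^n(b₂,r₂) = Δ^n(b₁+b₂, r₁+r₂) if and only if there exists a non-negative integer δ such that both b₁/r₁ and b₂/r₂ lie in the closed interval [δ/n, (δ+1)/n]. -/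
/-! In `∑_{k=1}^{n} max (b n - k r) 0` the terms with `k ≤ ⌊b n / r⌋` (which is `≤ n` as `b ≤ r`)
are `b n - k r` and the others vanish, so Gauss's formula turns the sum into `Δⁿ(b, r)`.
The `k`-th term for `(b₁ + b₂, r₁ + r₂)` is the positive part of the sum of the `k`-th terms for the
two pairs, so the identity holds iff the positive part is additive at every `k`, i.e. iff
`b₁ n - k r₁` and `b₂ n - k r₂` never have strictly opposite signs. That says no integer
`k ∈ [1, n]` lies strictly between `n b₁ / r₁` and `n b₂ / r₂`, i.e. both lie
in a common interval `[δ, δ + 1]`. -/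

open Finset

lemma max_add_zero_le {α : Type*} [AddCommMonoid α] [LinearOrder α] [IsOrderedAddMonoid α]
    (a b : α) : max (a + b) 0 ≤ max a 0 + max b 0 := by
  simpa using max_add_add_le_max_add_max (a := a) (b := b) (c := (0 : α)) (d := 0)

section PosPart
variable {α : Type*} [CommRing α] [LinearOrder α] [IsStrictOrderedRing α]

lemma max_add_zero_eq_iff_of_nonneg_of_nonpos {a b : α} (ha : 0 ≤ a) (hb : b ≤ 0) :
    max (a + b) 0 = max a 0 + max b 0 ↔ 0 ≤ a * b := by
  rw [max_eq_left ha, max_eq_right hb, add_zero]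
  constructor
  · intro h
    rcases le_total 0 (a + b) with hab | hab
    · rw [max_eq_left hab] at h
      simp [show b = 0 by linarith]
    · rw [max_eq_right hab] at h
      simp [← h]
  · intro h
    rcases mul_eq_zero.1 (le_antisymm (mul_nonpos_of_nonneg_of_nonpos ha hb) h) with rfl | rfl
    · simp [hb]
    · simp [ha]

lemma max_add_zero_eq_iff (a b : α) : max (a + b) 0 = max a 0 + max b 0 ↔ 0 ≤ a * b := by
  rcases le_total 0 a with ha | ha <;> rcases le_total 0 b with hb | hb
  · simp [ha, hb, add_nonneg ha hb, mul_nonneg ha hb]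
  · exact max_add_zero_eq_iff_of_nonneg_of_nonpos ha hb
  · rw [add_comm, add_comm (max a 0), mul_comm]
    exact max_add_zero_eq_iff_of_nonneg_of_nonpos hb ha
  · simp [ha, hb, add_nonpos ha hb, mul_nonneg_of_nonpos_of_nonpos ha hb]

end PosPart

lemma sum_Icc_one_id_mul_two {R : Type*} [CommSemiring R] (d : ℕ) :
    (∑ k ∈ Icc 1 d, (k : R)) * 2 = d * (d + 1) := by
  induction d with
  | zero => simp
  | succ d ih =>
    rw [sum_Icc_succ_top (by omega), add_mul, ih]
    push_cast
    ring

lemma sum_Icc_max_sub_mul_eq {α : Type*} [CommRing α] [LinearOrder α] [IsStrictOrderedRing α]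
    {B r : α} {d n : ℕ} (hdn : d ≤ n) (hlo : d * r ≤ B) (hhi : B < (d + 1) * r) :
    ∑ k ∈ Icc 1 n, max (B - k * r) 0 = ∑ k ∈ Icc 1 d, (B - k * r) := by
  have hr : 0 ≤ r := by linarith
  rw [← sum_subset (Icc_subset_Icc_right hdn)]
  · refine sum_congr rfl fun k hk => max_eq_left ?_
    have hkd : (k : α) ≤ d := by exact_mod_cast (mem_Icc.1 hk).2
    nlinarith
  · intro k hkn hkd
    have hdk : (d : α) + 1 ≤ k := by
      exact_mod_cast (show d + 1 ≤ k by simp only [mem_Icc] at hkn hkd; omega)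
    refine max_eq_right ?_
    nlinarith

lemma Delta_eq_sum_max {n b r : ℕ} (hr : 0 < r) (hbr : b ≤ r) :
    Delta n b r = ∑ k ∈ Icc 1 n, max ((b : ℤ) * n - k * r) 0 := by
  set d := b * n / r with hd
  have hdn : d ≤ n := Nat.div_le_of_le_mul (Nat.mul_le_mul_right n hbr)
  have hlo : (d : ℤ) * r ≤ b * n := by exact_mod_cast Nat.div_mul_le_self _ _
  have hhi : (b : ℤ) * n < (d + 1) * r := by
    exact_mod_cast (Nat.lt_mul_div_succ (b * n) hr).trans_eq (mul_comm _ _)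
  have gauss := sum_Icc_one_id_mul_two (R := ℤ) d
  rw [sum_Icc_max_sub_mul_eq hdn hlo hhi, sum_sub_distrib, sum_const, Nat.card_Icc, ← sum_mul]
  simp only [Delta, ← hd]
  rw [show (r : ℤ) * ((d : ℤ) ^ 2 + d) = 2 * ((∑ k ∈ Icc 1 d, (k : ℤ)) * r) by
      linear_combination -(r : ℤ) * gauss,
    Int.mul_ediv_cancel_left _ two_ne_zero, add_tsub_cancel_right, nsmul_eq_mul]
  ring

section Floor
variable {α : Type*} [CommRing α] [LinearOrder α] [IsStrictOrderedRing α] [FloorSemiring α]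

lemma mul_sub_natCast_nonneg {x y : α} {δ : ℕ} (hx : δ ≤ x ∧ x ≤ δ + 1) (hy : δ ≤ y ∧ y ≤ δ + 1)
    (k : ℕ) : 0 ≤ (x - k) * (y - k) := by
  rcases le_or_gt k δ with hk | hk
  · have hk' : (k : α) ≤ δ := by exact_mod_cast hk
    exact mul_nonneg (by linarith) (by linarith)
  · have hk' : (δ : α) + 1 ≤ k := by exact_mod_cast hk
    exact mul_nonneg_of_nonpos_of_nonpos (by linarith) (by linarith)

lemma exists_natCast_le_and_le_add_one_of_floor_le {x y : α} {n : ℕ} (hx : 0 ≤ x) (hy : 0 ≤ y)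
    (hyn : y ≤ n) (hxy : ⌊x⌋₊ ≤ ⌊y⌋₊) (h : ∀ k ∈ Icc 1 n, 0 ≤ (x - k) * (y - k)) :
    ∃ δ : ℕ, (δ ≤ x ∧ x ≤ δ + 1) ∧ (δ ≤ y ∧ y ≤ δ + 1) := by
  have hx_lt : x < ⌊x⌋₊ + 1 := Nat.lt_floor_add_one x
  refine ⟨⌊x⌋₊, ⟨Nat.floor_le hx, hx_lt.le⟩, (Nat.cast_le.2 hxy).trans (Nat.floor_le hy), ?_⟩
  by_contra! hy_gt
  have hk : ⌊x⌋₊ + 1 ∈ Icc 1 n := by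
    refine mem_Icc.2 ⟨by omega, ?_⟩
    exact_mod_cast (show ((⌊x⌋₊ + 1 : ℕ) : α) ≤ n by push_cast; linarith)
  have := h _ hk
  push_cast at this
  exact (mul_neg_of_neg_of_pos (by linarith) (by linarith)).not_ge this

lemma forall_mul_sub_natCast_nonneg_iff {x y : α} {n : ℕ} (hx : 0 ≤ x) (hy : 0 ≤ y)
    (hxn : x ≤ n) (hyn : y ≤ n) :
    (∀ k ∈ Icc 1 n, 0 ≤ (x - k) * (y - k)) ↔
      ∃ δ : ℕ, (δ ≤ x ∧ x ≤ δ + 1) ∧ (δ ≤ y ∧ y ≤ δ + 1) := by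
  refine ⟨fun h => ?_, fun ⟨δ, hδx, hδy⟩ k _ => mul_sub_natCast_nonneg hδx hδy k⟩
  rcases le_total ⌊x⌋₊ ⌊y⌋₊ with hxy | hyx
  · exact exists_natCast_le_and_le_add_one_of_floor_le hx hy hyn hxy h
  · obtain ⟨δ, hδy, hδx⟩ := exists_natCast_le_and_le_add_one_of_floor_le hy hx hxn hyx
      fun k hk => mul_comm (x - k) (y - k) ▸ h k hk
    exact ⟨δ, hδx, hδy⟩

end Floor

section Field
variable {α : Type*} [Field α] [LinearOrder α] [IsStrictOrderedRing α]

lemma forall_mul_sub_div_nonneg_iff [FloorSemiring α] {x y : α} {n : ℕ} (hn : 0 < n)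
    (hx₀ : 0 ≤ x) (hx₁ : x ≤ 1) (hy₀ : 0 ≤ y) (hy₁ : y ≤ 1) :
    (∀ k ∈ Icc 1 n, 0 ≤ (x - k / n) * (y - k / n)) ↔
      ∃ δ : ℕ, (δ / n ≤ x ∧ x ≤ (δ + 1) / n) ∧ (δ / n ≤ y ∧ y ≤ (δ + 1) / n) := by
  have hn' : (0 : α) < n := by exact_mod_cast hn
  have hscale : ∀ z k : α, z - k / n = (n * z - k) / n := fun z k => by field_simp
  simp_rw [hscale, div_mul_div_comm, le_div_iff₀ (mul_pos hn' hn'), zero_mul, div_le_iff₀' hn',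
    le_div_iff₀' hn']
  exact forall_mul_sub_natCast_nonneg_iff (by positivity) (by positivity)
    (mul_le_of_le_one_right hn'.le hx₁) (mul_le_of_le_one_right hn'.le hy₁)

lemma intCast_mul_sub_nonneg_iff {b₁ r₁ b₂ r₂ n : ℕ} (k : ℕ) (hr₁ : 0 < r₁) (hr₂ : 0 < r₂)
    (hn : 0 < n) :
    0 ≤ ((b₁ : ℤ) * n - k * r₁) * ((b₂ : ℤ) * n - k * r₂) ↔
      0 ≤ ((b₁ : α) / r₁ - k / n) * ((b₂ : α) / r₂ - k / n) := by
  have hfactor : ((((b₁ : ℤ) * n - k * r₁) * ((b₂ : ℤ) * n - k * r₂) : ℤ) : α) =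
      (r₁ * r₂ * n ^ 2) * (((b₁ : α) / r₁ - k / n) * ((b₂ : α) / r₂ - k / n)) := by
    push_cast
    field_simp
  rw [← Int.cast_nonneg_iff (R := α), hfactor, mul_nonneg_iff_of_pos_left (by positivity)]

end Field

lemma Delta_add_eq_iff {n b₁ r₁ b₂ r₂ : ℕ} (hr₁ : 0 < r₁) (hbr₁ : b₁ ≤ r₁) (hr₂ : 0 < r₂)
    (hbr₂ : b₂ ≤ r₂) :
    Delta n b₁ r₁ + Delta n b₂ r₂ = Delta n (b₁ + b₂) (r₁ + r₂) ↔
      ∀ k ∈ Icc 1 n, 0 ≤ ((b₁ : ℤ) * n - k * r₁) * ((b₂ : ℤ) * n - k * r₂) := by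
  have hsplit : ∀ k : ℕ, ((b₁ + b₂ : ℕ) : ℤ) * n - k * ((r₁ + r₂ : ℕ) : ℤ) =
      ((b₁ : ℤ) * n - k * r₁) + ((b₂ : ℤ) * n - k * r₂) := fun k => by push_cast; ring
  rw [Delta_eq_sum_max hr₁ hbr₁, Delta_eq_sum_max hr₂ hbr₂,
    Delta_eq_sum_max (by omega) (by omega), ← sum_add_distrib, eq_comm]
  simp_rw [hsplit]
  rw [sum_eq_sum_iff_of_le fun k _ => max_add_zero_le _ _]
  simp_rw [max_add_zero_eq_iff]

theorem stmt_3_general (b₁ r₁ b₂ r₂ : ℕ) (hr₁ : b₁ < r₁) (hr₂ : b₂ < r₂) (n : ℕ) (hn : 2 ≤ n) :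
    Delta n b₁ r₁ + Delta n b₂ r₂ = Delta n (b₁ + b₂) (r₁ + r₂) ↔
      ∃ δ : ℕ, ((δ : ℚ) / n ≤ (b₁ : ℚ) / r₁ ∧ (b₁ : ℚ) / r₁ ≤ ((δ : ℚ) + 1) / n) ∧
        ((δ : ℚ) / n ≤ (b₂ : ℚ) / r₂ ∧ (b₂ : ℚ) / r₂ ≤ ((δ : ℚ) + 1) / n) := by
  have h0r₁ : 0 < r₁ := by omega
  have h0r₂ : 0 < r₂ := by omega
  have h0n : 0 < n := by omega
  have hr₁' : (b₁ : ℚ) / r₁ ≤ 1 := div_le_one_of_le₀ (by exact_mod_cast hr₁.le) (by positivity)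
  have hr₂' : (b₂ : ℚ) / r₂ ≤ 1 := div_le_one_of_le₀ (by exact_mod_cast hr₂.le) (by positivity)
  rw [Delta_add_eq_iff h0r₁ hr₁.le h0r₂ hr₂.le,
    ← forall_mul_sub_div_nonneg_iff h0n (by positivity) hr₁' (by positivity) hr₂']
  exact forall₂_congr fun k _ => intCast_mul_sub_nonneg_iff k h0r₁ h0r₂ h0n

theorem stmt_3 (b₁ r₁ b₂ r₂ : ℕ) (hb₁ : 0 < b₁) (hr₁ : b₁ < r₁)
    (hb₂ : 0 < b₂) (hr₂ : b₂ < r₂) (n : ℕ) (hn : 2 ≤ n) :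
    Delta n b₁ r₁ + Delta n b₂ r₂ = Delta n (b₁ + b₂) (r₁ + r₂) ↔
      ∃ δ : ℕ, ((δ : ℚ) / n ≤ (b₁ : ℚ) / r₁ ∧ (b₁ : ℚ) / r₁ ≤ ((δ : ℚ) + 1) / n) ∧
        ((δ : ℚ) / n ≤ (b₂ : ℚ) / r₂ ∧ (b₂ : ℚ) / r₂ ≤ ((δ : ℚ) + 1) / n) :=
  stmt_3_general b₁ r₁ b₂ r₂ hr₁ hr₂ n hn
end
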